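/- The explosion metainference 'from ⇒ A and ⇒ ¬A infer ⇒ B' fails strict-tolerantly in intuitionistic Kripke semantics: there is an intuitionistic interpretation in which neither a nor ¬a is false (for an atom a) but an atom b is false. -/
import Mathlib


/-- Formulas of the propositional language: atoms, ⊥, ∧, ∨, →. -/
inductive Fm : Type where
  | atom : ℕ → Fm
  | bot : Fm
  | and : Fm → Fm → Fm
  | or : Fm → Fm → Fm
  | imp : Fm → Fm → Fm

/-- ¬A abbreviates A → ⊥. -/
def Fm.neg (A : Fm) : Fm := Fm.imp A Fm.bot

/-- A minimal Kripke interpretation: reflexive transitive frame, persistent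
two-valued valuation, standard clauses for ∧, ∨, →; ⊥ may be true at worlds. -/
structure Interp where
  W : Type
  ne : Nonempty W
  R : W → W → Prop
  refl : ∀ w, R w w
  trans : ∀ {a b c}, R a b → R b c → R a c
  v : W → Fm → Bool
  persist : ∀ (A : Fm) {w w'}, R w w' → v w A = true → v w' A = true
  and_clause : ∀ w A B, v w (Fm.and A B) = (v w A && v w B)
  or_clause : ∀ w A B, v w (Fm.or A B) = (v w A || v w B)
  imp_clause : ∀ w A B, v w (Fm.imp A B) = true ↔
    ∀ w', R w w' → (v w' A = false ∨ v w' B = true)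

/-- An intuitionistic Kripke interpretation: a minimal one where ⊥ is never true. -/
structure IInterp extends Interp where
  bot_false : ∀ w, v w Fm.bot = false

/-- A is true in an interpretation iff it gets value 1 at all worlds. -/
def Interp.Tr (I : Interp) (A : Fm) : Prop := ∀ w, I.v w A = true

/-- A is false in an interpretation iff ¬A is true in it. -/
def Interp.Fls (I : Interp) (A : Fm) : Prop := I.Tr A.neg

/-- Strict-tolerant inference Γ ⇒ Δ (set conclusion): if all of Γ is true,
not all of Δ is false. -/
def Interp.ST (I : Interp) (Γ Δ : Set Fm) : Prop :=
  (∀ B ∈ Γ, I.Tr B) → ¬ (∀ A ∈ Δ, I.Fls A)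

/-- Strict-tolerant inference Γ ⇒ A with a single conclusion formula. -/
def Interp.STone (I : Interp) (Γ : Set Fm) (A : Fm) : Prop :=
  (∀ B ∈ Γ, I.Tr B) → ¬ I.Fls A

/-- Strict-tolerant metainference: either some premise inference fails
(all its premises true and its conclusion false), or the conclusion
inference holds (Γ not all true, or A not false). -/
def Interp.Meta (I : Interp) (prems : List (Set Fm × Fm)) (Γ : Set Fm) (A : Fm) : Prop :=
  (∃ p ∈ prems, (∀ B ∈ p.1, I.Tr B) ∧ I.Fls p.2) ∨
  (¬ ∀ B ∈ Γ, I.Tr B) ∨ ¬ I.Fls A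

/-- Classical Boolean evaluation of formulas. -/
def evalC (val : ℕ → Bool) : Fm → Bool
  | Fm.atom n => val n
  | Fm.bot => false
  | Fm.and A B => evalC val A && evalC val B
  | Fm.or A B => evalC val A || evalC val B
  | Fm.imp A B => !evalC val A || evalC val B

/-- Classical entailment. -/
def ClassEnt (Γ : Set Fm) (A : Fm) : Prop :=
  ∀ val : ℕ → Bool, (∀ B ∈ Γ, evalC val B = true) → evalC val A = true

/-- Intuitionistic entailment over Kripke semantics. -/
def IntEnt (Γ : Set Fm) (A : Fm) : Prop :=
  ∀ I : IInterp, (∀ B ∈ Γ, I.toInterp.Tr B) → I.toInterp.Tr A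

/-- Disjunction A₁ ∨ ... ∨ Aₙ of a nonempty list A :: l. -/
def bigOr : Fm → List Fm → Fm
  | A, [] => A
  | A, B :: l => Fm.or A (bigOr B l)


def v3 : Fm → Fin 3 → Bool
  | .atom 0, w => w == 1
  | .atom (_+1), _ => false
  | .bot, _ => false
  | .and A B, w => v3 A w && v3 B w
  | .or A B, w => v3 A w || v3 B w
  | .imp A B, w => decide (∀ w', (w = w' ∨ w = 0) → (v3 A w' = false ∨ v3 B w' = true))

lemma v3_persist (A : Fm) : ∀ {w w' : Fin 3}, (w = w' ∨ w = 0) → v3 A w = true → v3 A w' = true := by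
  induction A with
  | atom n =>
    intro w w' h hv
    cases n with
    | zero =>
      simp only [v3, beq_iff_eq] at hv ⊢
      rcases h with h | h
      · exact h ▸ hv
      · exact absurd (h ▸ hv) (by decide)
    | succ n => simp [v3] at hv
  | bot => intro w w' h hv; simp [v3] at hv
  | and A B ihA ihB =>
    intro w w' h hv
    simp only [v3, Bool.and_eq_true] at hv ⊢
    exact ⟨ihA h hv.1, ihB h hv.2⟩
  | or A B ihA ihB =>
    intro w w' h hv
    simp only [v3, Bool.or_eq_true] at hv ⊢
    rcases hv with hv | hv
    · exact Or.inl (ihA h hv)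
    · exact Or.inr (ihB h hv)
  | imp A B _ _ =>
    intro w w' h hv
    simp only [v3, decide_eq_true_eq] at hv ⊢
    intro w'' h''
    apply hv
    rcases h with h | h
    · exact h ▸ h''
    · exact Or.inr h

def I3 : IInterp where
  W := Fin 3
  ne := ⟨0⟩
  R w w' := w = w' ∨ w = 0
  refl w := Or.inl rfl
  trans := by
    rintro a b c (rfl | rfl) hbc
    · exact hbc
    · exact Or.inr rfl
  v w A := v3 A w
  persist A _ _ h hv := v3_persist A h hv
  and_clause w A B := rfl
  or_clause w A B := rfl
  imp_clause w A B := by simp [v3]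
  bot_false w := rfl

theorem stmt13 :
    ∃ I : IInterp, ¬ I.toInterp.Fls (Fm.atom 0) ∧ ¬ I.toInterp.Fls (Fm.neg (Fm.atom 0)) ∧
      I.toInterp.Fls (Fm.atom 1) := by
  refine ⟨I3, ?_, ?_, ?_⟩
  · show ¬ ∀ w : Fin 3, v3 (Fm.atom 0).neg w = true
    decide
  · show ¬ ∀ w : Fin 3, v3 (Fm.neg (Fm.atom 0)).neg w = true
    decide
  · show ∀ w : Fin 3, v3 (Fm.atom 1).neg w = true
    decide
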